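/- arXiv:2511.00275 — 2 statements merged into one kernel-verified Lean document; each statement's English description precedes it below -/
import Mathlib

section
/- With n(r) as above, for every k ≥ 2 and every r with (3/2)·2^{k-1} ≤ r < 2^k, one has n(r)/r ≤ 4/3. In particular, liminf_{r→∞} n(r)/r ≤ 4/3 < 2. -/
open Filter Complex

/-- The counting function `n(r)` for the points `a_{kj} = 2^k · e^{2πij/2^k}`. -/
noncomputable def nA (r : ℝ) : ℕ :=
  Set.ncard {p : ℕ × ℕ | 1 ≤ p.1 ∧ 1 ≤ p.2 ∧ p.2 ≤ 2 ^ p.1 ∧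
    ‖(2 : ℂ) ^ p.1 *
      Complex.exp (2 * Real.pi * Complex.I * p.2 / 2 ^ p.1)‖ ≤ r}

/-! All points of level `m` lie on the circle of radius `2^m`, so for `r < 2^k` only the levels
`m < k` are counted, and there are at most `∑_{m<k} 2^m < 2^k` of them. The bound `n(r) < 2^k`
divided by `r ≥ (3/2) 2^(k-1)` gives `4/3`, and these radii tend to infinity. -/

lemma norm_two_pow_mul_exp (m j : ℕ) :
    ‖(2 : ℂ) ^ m * Complex.exp (2 * Real.pi * Complex.I * j / 2 ^ m)‖ = 2 ^ m := by
  rw [norm_mul,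
    show 2 * Real.pi * Complex.I * j / 2 ^ m = ((2 * Real.pi * j / 2 ^ m : ℝ) : ℂ) * I by
      push_cast; ring,
    Complex.norm_exp_ofReal_mul_I]
  simp

lemma ncard_le_sum_of_subset_levels {k : ℕ} {b : ℕ → ℕ} {s : Set (ℕ × ℕ)}
    (hs : ∀ p ∈ s, p.1 < k ∧ p.2 ∈ Finset.Icc 1 (b p.1)) :
    s.ncard ≤ ∑ m ∈ Finset.range k, b m := by
  let levels := (Finset.range k).sigma fun m => Finset.Icc 1 (b m)
  have hsub : s ⊆ levels.image fun x => (x.1, x.2) := fun p hp =>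
    Finset.mem_image.mpr ⟨⟨p.1, p.2⟩, by simpa [levels] using hs p hp, rfl⟩
  calc s.ncard ≤ (levels.image fun x => (x.1, x.2)).card :=
        (Set.ncard_le_ncard hsub (Finset.finite_toSet _)).trans_eq (Set.ncard_coe_finset _)
    _ ≤ levels.card := Finset.card_image_le
    _ = ∑ m ∈ Finset.range k, b m := by simp [levels]

lemma nA_lt_two_pow {k : ℕ} {r : ℝ} (hr : r < 2 ^ k) : nA r < 2 ^ k := by
  refine lt_of_le_of_lt (ncard_le_sum_of_subset_levels (k := k) fun p hp => ?_)
    (Nat.geomSum_lt le_rfl fun m hm => Finset.mem_range.mp hm)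
  obtain ⟨-, h1, h2, hnorm⟩ := hp
  rw [norm_two_pow_mul_exp] at hnorm
  have hlevel : (2 : ℝ) ^ p.1 < 2 ^ k := hnorm.trans_lt hr
  exact ⟨(pow_lt_pow_iff_right₀ one_lt_two).mp hlevel, Finset.mem_Icc.mpr ⟨h1, h2⟩⟩

lemma nA_div_le {k : ℕ} (hk : 1 ≤ k) {r : ℝ} (hr₁ : (3 / 2) * 2 ^ (k - 1) ≤ r)
    (hr₂ : r < 2 ^ k) : (nA r : ℝ) / r ≤ 4 / 3 := by
  have hr : 0 < r := lt_of_lt_of_le (by positivity) hr₁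
  have hcount : (nA r : ℝ) < 2 ^ k := by exact_mod_cast nA_lt_two_pow hr₂
  have hpow : (2 : ℝ) ^ k = 2 * 2 ^ (k - 1) := by
    rw [← pow_succ', Nat.sub_add_cancel hk]
  rw [div_le_div_iff₀ hr (by norm_num)]
  linarith

theorem counting_ratio_le :
    (∀ k : ℕ, 2 ≤ k → ∀ r : ℝ, (3 / 2) * 2 ^ (k - 1) ≤ r → r < 2 ^ k →
      (nA r : ℝ) / r ≤ 4 / 3) ∧
    Filter.liminf (fun r : ℝ => (nA r : ℝ) / r) Filter.atTop ≤ 4 / 3 := by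
  refine ⟨fun k hk _ => nA_div_le (by omega), ?_⟩
  have hradii : Tendsto (fun k : ℕ => (3 / 2 : ℝ) * 2 ^ k) atTop atTop :=
    (tendsto_pow_atTop_atTop_of_one_lt one_lt_two).const_mul_atTop (by norm_num)
  refine liminf_le_of_frequently_le ?_ ?_
  · refine hradii.frequently <|
      Frequently.of_forall fun k => nA_div_le (k := k + 1) le_add_self ?_ ?_
    · simp
    · rw [pow_succ]; linarith [pow_pos (two_pos : (0 : ℝ) < 2) k]
  · exact isBoundedUnder_of_eventually_ge <|
      (eventually_ge_atTop 0).mono fun r hr => div_nonneg (Nat.cast_nonneg _) hr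
end

section
/- Suppose F is entire with indicator value h_F(0) = limsup_{r→∞} log|F(r)|/r = 2, and suppose lim_{r→∞} (log|F(r)|)/r does NOT exist even after excluding any set of relative measure zero. If u is entire with sup_{Re z ≥ 0} |u(z)| < ∞ and u(r) → 0 (r → +∞ real), then F + u also fails to have the restricted limit lim*_{r→∞} log|(F+u)(r)|/r existing and equal to 2. -/
/-! If `‖b‖ ≤ ‖a + b‖ / 2` then `log ‖a‖` and `log ‖a + b‖` differ by at most `log 2`. Along
`atTop ⊓ 𝓟 Eᶜ` we have `log ‖F r + u r‖ ≈ 2r`, so `‖F r + u r‖` eventually dominates the bounded `u r`;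
after division by `r` the error `log 2 / r` vanishes, so `log ‖F r‖ / r → 2` outside `E` as well,
which the irregularity of `F` forbids. -/

open Filter MeasureTheory Complex

/-- `E ⊆ (0,∞)` has relative measure zero: `λ(E ∩ (0,r))/r → 0` as `r → ∞`. -/
def RelMeasureZero (E : Set ℝ) : Prop :=
  Filter.Tendsto (fun r : ℝ => (MeasureTheory.volume (E ∩ Set.Ioo 0 r)).toReal / r)
    Filter.atTop (nhds 0)

open Topology

section LogNorm

variable {E : Type*} [SeminormedAddCommGroup E]

theorem abs_log_norm_sub_log_norm_add_le_log_two {a b : E} (h : 2 * ‖b‖ ≤ ‖a + b‖) :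
    |Real.log ‖a‖ - Real.log ‖a + b‖| ≤ Real.log 2 := by
  have hle : ‖a + b‖ ≤ ‖a‖ + ‖b‖ := norm_add_le a b
  have hge : ‖a‖ ≤ ‖a + b‖ + ‖b‖ := by simpa using norm_sub_le (a + b) b
  rcases (norm_nonneg (a + b)).eq_or_lt with hs | hs
  · have ha : ‖a‖ = 0 := by linarith [norm_nonneg a, norm_nonneg b]
    simp [ha, ← hs, Real.log_nonneg]
  have ha : 0 < ‖a‖ := by linarith [norm_nonneg b]
  rw [abs_le]
  constructor
  · have : Real.log ‖a + b‖ ≤ Real.log (2 * ‖a‖) := Real.log_le_log hs (by linarith)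
    rw [Real.log_mul two_ne_zero ha.ne'] at this
    linarith
  · have : Real.log ‖a‖ ≤ Real.log (2 * ‖a + b‖) :=
      Real.log_le_log ha (by linarith [norm_nonneg b])
    rw [Real.log_mul two_ne_zero hs.ne'] at this
    linarith

theorem tendsto_log_norm_div_of_tendsto_log_norm_add_div {l : Filter ℝ} (hl : l ≤ atTop)
    {f g : ℝ → E} {L : ℝ} (hL : 0 < L)
    (hfg : Tendsto (fun r => Real.log ‖f r + g r‖ / r) l (𝓝 L))
    (hg : IsBoundedUnder (· ≤ ·) l fun r => ‖g r‖) :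
    Tendsto (fun r => Real.log ‖f r‖ / r) l (𝓝 L) := by
  obtain ⟨C, hC⟩ := hg
  have hpos : ∀ᶠ r in l, 0 < r := hl (eventually_gt_atTop 0)
  have hlog : Tendsto (fun r => Real.log ‖f r + g r‖) l atTop := by
    refine ((tendsto_id.mono_left hl).atTop_mul_pos hL hfg).congr' ?_
    filter_upwards [hpos] with r hr
    exact mul_div_cancel₀ _ hr.ne'
  have hsmall : ∀ᶠ r in l, 2 * ‖g r‖ ≤ ‖f r + g r‖ := by
    filter_upwards [hC, hlog.eventually_ge_atTop (2 * C)] with r (hCr : ‖g r‖ ≤ C) hr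
    linarith [Real.log_le_self (norm_nonneg (f r + g r))]
  have hdiff : Tendsto (fun r => Real.log ‖f r‖ / r - Real.log ‖f r + g r‖ / r) l (𝓝 0) := by
    refine squeeze_zero_norm' (a := fun r => Real.log 2 / r) ?_
      (tendsto_const_nhds.div_atTop (tendsto_id.mono_left hl))
    filter_upwards [hsmall, hpos] with r hr hr0
    rw [← sub_div, norm_div, Real.norm_of_nonneg hr0.le]
    exact div_le_div_of_nonneg_right (abs_log_norm_sub_log_norm_add_le_log_two hr) hr0.le
  simpa using hfg.add hdiff

end LogNorm

theorem irregular_growth_preserved_general (F u : ℂ → ℂ)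
    (hbad : ¬ ∃ E : Set ℝ, MeasurableSet E ∧ RelMeasureZero E ∧ ∃ L : ℝ,
      Filter.Tendsto (fun r : ℝ => Real.log (‖F r‖) / r)
        (Filter.atTop ⊓ Filter.principal Eᶜ) (nhds L))
    (hu0 : Filter.Tendsto (fun r : ℝ => u r) Filter.atTop (nhds 0)) :
    ¬ ∃ E : Set ℝ, MeasurableSet E ∧ RelMeasureZero E ∧
      Filter.Tendsto (fun r : ℝ => Real.log (‖F r + u r‖) / r)
        (Filter.atTop ⊓ Filter.principal Eᶜ) (nhds 2) := by
  rintro ⟨E, hE, hrel, htend⟩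
  have hbdd : IsBoundedUnder (· ≤ ·) (atTop ⊓ 𝓟 Eᶜ) fun r : ℝ => ‖u r‖ :=
    (hu0.norm.isBoundedUnder_le).mono inf_le_left
  exact hbad ⟨E, hE, hrel, 2,
    tendsto_log_norm_div_of_tendsto_log_norm_add_div inf_le_left two_pos htend hbdd⟩

theorem irregular_growth_preserved (F u : ℂ → ℂ)
    (hF : Differentiable ℂ F) (hu : Differentiable ℂ u)
    (hind : Filter.limsup (fun r : ℝ => Real.log (‖F r‖) / r)
      Filter.atTop = 2)
    (hbad : ¬ ∃ E : Set ℝ, MeasurableSet E ∧ RelMeasureZero E ∧ ∃ L : ℝ,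
      Filter.Tendsto (fun r : ℝ => Real.log (‖F r‖) / r)
        (Filter.atTop ⊓ Filter.principal Eᶜ) (nhds L))
    (hubdd : ∃ M : ℝ, ∀ z : ℂ, 0 ≤ z.re → ‖u z‖ ≤ M)
    (hu0 : Filter.Tendsto (fun r : ℝ => u r) Filter.atTop (nhds 0)) :
    ¬ ∃ E : Set ℝ, MeasurableSet E ∧ RelMeasureZero E ∧
      Filter.Tendsto (fun r : ℝ => Real.log (‖F r + u r‖) / r)
        (Filter.atTop ⊓ Filter.principal Eᶜ) (nhds 2) :=
  irregular_growth_preserved_general F u hbad hu0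
end
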